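/- Let n, m be natural numbers and A, B : ℤ → Matrix (Fin n) (Fin n) ℂ families of complex n×n matrices supported in [−m, m] and satisfying the reality conditions A(−k) = conj(A(k)) and B(−k) = conj(B(k)) for all k ∈ ℤ, where conj denotes entrywise complex conjugation. Then −i · ∑_{j=0}^{m} ∑_{r=−m}^{−j−1} ( tr(A(r)ᴴ · B(r)) − tr(B(r)ᴴ · A(r)) ) = i · ∑_{k=−m}^{m} k · tr( A(k)ᴴ · B(k) ). -/

import Mathlib

/-!
Write `t k = tr(A_kᴴ B_k)`. Then `tr(B_kᴴ A_k) = conj (t k)`, and the reality conditions give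
`t (-k) = conj (t k)`. Exchanging the two sums on the left, the index `r < 0` occurs for the
`-r` values `j = 0, …, -r - 1`, so the left side is `-i ∑_{r=-m}^{-1} (-r) (t r - t (-r))`.
Pairing `k` with `-k` on the right turns `∑_{k=-m}^{m} k t k` into `∑_{r=-m}^{-1} r (t r - t (-r))`.
-/

open Matrix Finset

namespace Matrix

variable {m n R : Type*} [Fintype m] [Fintype n]

theorem trace_conjTranspose_mul_swap [NonUnitalNonAssocSemiring R] [StarRing R]
    (A B : Matrix m n R) : (Bᴴ * A).trace = star (Aᴴ * B).trace := by
  rw [← trace_conjTranspose, conjTranspose_mul, conjTranspose_conjTranspose]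

theorem trace_conjTranspose_map_star_mul [CommSemiring R] [StarRing R] (A B : Matrix m n R) :
    ((A.map (starRingEnd R))ᴴ * B.map (starRingEnd R)).trace = starRingEnd R (Aᴴ * B).trace := by
  rw [← conjTranspose_map (starRingEnd R) fun _ => rfl, ← Matrix.map_mul, AddMonoidHom.map_trace]

end Matrix

section IntervalSums

variable {M : Type*} [AddCommGroup M]

theorem sum_range_sum_Icc_neg (m : ℕ) (f : ℤ → M) :
    ∑ j ∈ range (m + 1), ∑ r ∈ Icc (-(m : ℤ)) (-(j : ℤ) - 1), f r
      = ∑ r ∈ Icc (-(m : ℤ)) (-1), (-r) • f r := by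
  rw [sum_comm' (t' := Icc (-(m : ℤ)) (-1)) (s' := fun r => range (-r).toNat)]
  · refine sum_congr rfl fun r hr => ?_
    rw [sum_const, card_range, ← natCast_zsmul, Int.toNat_of_nonneg (by simp only [mem_Icc] at hr; omega)]
  · intro j r
    simp only [mem_range, mem_Icc]
    omega

theorem sum_Icc_pos_eq_sum_Icc_neg (m : ℕ) (f : ℤ → M) :
    ∑ k ∈ Icc (1 : ℤ) m, f k = ∑ r ∈ Icc (-(m : ℤ)) (-1), f (-r) := by
  refine sum_nbij' (fun k => -k) (fun r => -r) ?_ ?_ (fun _ _ => neg_neg _)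
    (fun _ _ => neg_neg _) (fun k _ => by rw [neg_neg])
  all_goals intro k hk; simp only [mem_Icc] at hk ⊢; omega

theorem sum_Icc_zsmul_eq_sum_Icc_neg (m : ℕ) (g : ℤ → M) :
    ∑ k ∈ Icc (-(m : ℤ)) m, k • g k = ∑ r ∈ Icc (-(m : ℤ)) (-1), r • (g r - g (-r)) := by
  have hsplit : ∑ k ∈ Icc (-(m : ℤ)) m, k • g k
      = ∑ k ∈ Icc (-(m : ℤ)) (-1) ∪ Icc 1 m, k • g k := by
    refine (sum_subset (fun k => by simp only [mem_union, mem_Icc]; omega) fun k hk hk' => ?_).symm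
    have hk0 : k = 0 := by simp only [mem_union, mem_Icc] at hk hk'; omega
    rw [hk0, zero_smul]
  have hdisj : Disjoint (Icc (-(m : ℤ)) (-1)) (Icc 1 m) :=
    disjoint_left.2 fun k hk hk' => by simp only [mem_Icc] at hk hk'; omega
  rw [hsplit, sum_union hdisj, sum_Icc_pos_eq_sum_Icc_neg, ← sum_add_distrib]
  refine sum_congr rfl fun r _ => ?_
  rw [neg_smul, smul_sub, sub_eq_add_neg]

end IntervalSums

theorem hilbert_schmidt_form_eq_loop_form_general (n m : ℕ)
    (A B : ℤ → Matrix (Fin n) (Fin n) ℂ)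
    (hA : ∀ k : ℤ, A (-k) = (A k).map (starRingEnd ℂ))
    (hB : ∀ k : ℤ, B (-k) = (B k).map (starRingEnd ℂ)) :
    -Complex.I *
        ∑ j ∈ Finset.range (m + 1),
          ∑ r ∈ Finset.Icc (-(m:ℤ)) (-(j:ℤ) - 1),
            (((A r)ᴴ * B r).trace - ((B r)ᴴ * A r).trace)
      = Complex.I *
          ∑ k ∈ Finset.Icc (-(m:ℤ)) (m:ℤ), (k:ℂ) * ((A k)ᴴ * B k).trace := by
  set t : ℤ → ℂ := fun k => ((A k)ᴴ * B k).trace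
  have ht_neg : ∀ r, t (-r) = ((B r)ᴴ * A r).trace := fun r => by
    change ((A (-r))ᴴ * B (-r)).trace = _
    rw [hA, hB, trace_conjTranspose_map_star_mul, trace_conjTranspose_mul_swap (A r),
      starRingEnd_apply]
  calc -Complex.I * ∑ j ∈ range (m + 1), ∑ r ∈ Icc (-(m:ℤ)) (-(j:ℤ) - 1),
          (((A r)ᴴ * B r).trace - ((B r)ᴴ * A r).trace)
      = -Complex.I * ∑ r ∈ Icc (-(m:ℤ)) (-1), (-r) • (t r - t (-r)) := by
        simp only [ht_neg]
        rw [sum_range_sum_Icc_neg]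
    _ = Complex.I * ∑ k ∈ Icc (-(m:ℤ)) m, k • t k := by
        simp only [neg_smul, sum_neg_distrib, sum_Icc_zsmul_eq_sum_Icc_neg]
        ring
    _ = _ := by simp only [zsmul_eq_mul, t]

/-- Evaluation of the Hilbert–Schmidt symplectic form
`ω_HS(f_X, f_Y) = -i ∑_{j=0}^{m} ∑_{r=-m}^{-j-1} (tr(A_rᴴ B_r) - tr(B_rᴴ A_r))`
on tangent vectors induced by loops with Fourier coefficients `A_k`, `B_k`
supported in `[-m, m]` and satisfying the reality conditions
`A(-k) = conj(A(k))`, `B(-k) = conj(B(k))`; it agrees with the loop-group value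
`i ∑_{k=-m}^{m} k · tr(A_kᴴ B_k)`. -/
theorem hilbert_schmidt_form_eq_loop_form (n m : ℕ)
    (A B : ℤ → Matrix (Fin n) (Fin n) ℂ)
    (hAsupp : ∀ k : ℤ, k ∉ Finset.Icc (-(m:ℤ)) (m:ℤ) → A k = 0)
    (hBsupp : ∀ k : ℤ, k ∉ Finset.Icc (-(m:ℤ)) (m:ℤ) → B k = 0)
    (hA : ∀ k : ℤ, A (-k) = (A k).map (starRingEnd ℂ))
    (hB : ∀ k : ℤ, B (-k) = (B k).map (starRingEnd ℂ)) :
    -Complex.I *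
        ∑ j ∈ Finset.range (m + 1),
          ∑ r ∈ Finset.Icc (-(m:ℤ)) (-(j:ℤ) - 1),
            (((A r)ᴴ * B r).trace - ((B r)ᴴ * A r).trace)
      = Complex.I *
          ∑ k ∈ Finset.Icc (-(m:ℤ)) (m:ℤ), (k:ℂ) * ((A k)ᴴ * B k).trace :=
  hilbert_schmidt_form_eq_loop_form_general n m A B hA hB
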